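/- arXiv:1911.01627 — 2 statements merged into one kernel-verified Lean document; each statement's English description precedes it below -/
import Mathlib

section
/- The bicharacter r satisfies r(y₁, g⁻¹y₁) = N·t⁻². (In the paper's notation: r(λ₀(1) ⊗ e^{−λ₀}λ₀(1)) = N(x−y)⁻².) -/
open TensorProduct

noncomputable section

/-- `Rb` is the commutative `ℂ`-algebra `ℂ[g,g⁻¹] ⊗ ℂ[y₁,y₂,…]`, realized as Laurent
polynomials in one variable with coefficients in a polynomial ring in countably many
variables.  It is the underlying algebra of Borcherds's rank-one lattice bialgebra `V^L`. -/
abbrev Rb : Type := LaurentPolynomial (MvPolynomial ℕ ℂ)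

/-- `Lt` is the Laurent polynomial ring `ℂ[t,t⁻¹]`. -/
abbrev Lt : Type := LaurentPolynomial ℂ

/-- `gp n` is the element `gⁿ` of `Rb`. -/
def gp (n : ℤ) : Rb := LaurentPolynomial.T n

/-- `yv k` is the variable `y_k` of `Rb` (only `k ≥ 1` is used). -/
def yv (k : ℕ) : Rb := LaurentPolynomial.C (MvPolynomial.X k)

/-- `tp n` is the element `tⁿ` of `ℂ[t,t⁻¹]`. -/
def tp (n : ℤ) : Lt := LaurentPolynomial.T n

/-!
Write `y₁ = D g`. By (B3) and (B1), `r(y₁, gᵐ) = d(t^{mN})`; since `g⁻¹` is grouplike, (B4)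
gives `r(g⁻¹y₁, g) = t^{-N} · N t^{N-1} = N t⁻¹`. The symmetry (B2) turns this into
`r(g, g⁻¹y₁) = -N t⁻¹` (as `ι(t⁻¹) = -t⁻¹`), and a last application of (B3) differentiates it
to `r(y₁, g⁻¹y₁) = N t⁻²`.
-/

open LaurentPolynomial

theorem LaurentPolynomial.map_T_neg_one_of_map_T_one_eq_neg {R : Type*} [CommRing R]
    (f : R[T;T⁻¹] →+* R[T;T⁻¹]) (hf : f (T 1) = -T 1) : f (T (-1)) = -T (-1) := by
  have hT : (T 1 * T (-1) : R[T;T⁻¹]) = 1 := by rw [← T_add, add_neg_cancel, T_zero]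
  have hfT : -T 1 * f (T (-1)) = 1 := by rw [← hf, ← map_mul, hT, map_one]
  linear_combination (-T (-1)) * hfT - f (T (-1)) * hT

theorem tp_add (a b : ℤ) : tp (a + b) = tp a * tp b := T_add a b

theorem bicharacter_gp_mul_apply_gp (N : ℕ) (Δ : Rb →ₐ[ℂ] Rb ⊗[ℂ] Rb)
    (hΔg : ∀ n : ℤ, Δ (gp n) = gp n ⊗ₜ[ℂ] gp n)
    (r : Rb →ₗ[ℂ] Rb →ₗ[ℂ] Lt)
    (hB1 : ∀ n m : ℤ, r (gp n) (gp m) = tp (n * m * (N : ℤ)))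
    (hB4 : ∀ v₁ v₂ w : Rb, r (v₁ * v₂) w =
      TensorProduct.lift ((LinearMap.mul ℂ Lt).compl₁₂ (r v₁) (r v₂)) (Δ w))
    (n m : ℤ) (v : Rb) :
    r (gp n * v) (gp m) = tp (n * m * N) * r v (gp m) := by
  rw [hB4, hΔg, lift.tmul, LinearMap.compl₁₂_apply, LinearMap.mul_apply', hB1]

theorem bicharacter_y1_apply_gp (N : ℕ) (D : Derivation ℂ Rb Rb) (hDg : D (gp 1) = yv 1)
    (d : Derivation ℂ Lt Lt) (hd : ∀ n : ℤ, d (tp n) = (n : ℂ) • tp (n - 1))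
    (r : Rb →ₗ[ℂ] Rb →ₗ[ℂ] Lt)
    (hB1 : ∀ n m : ℤ, r (gp n) (gp m) = tp (n * m * (N : ℤ)))
    (hB3 : ∀ v w : Rb, r (D v) w = d (r v w)) (m : ℤ) :
    r (yv 1) (gp m) = ((m * N : ℤ) : ℂ) • tp (m * N - 1) := by
  rw [← hDg, hB3, hB1, hd, one_mul]

theorem bicharacter_y1_ginv_y1_general
    (N : ℕ)
    (D : Derivation ℂ Rb Rb) (hDg : D (gp 1) = yv 1)
    (Δ : Rb →ₐ[ℂ] Rb ⊗[ℂ] Rb)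
    (hΔg : ∀ n : ℤ, Δ (gp n) = gp n ⊗ₜ[ℂ] gp n)
    (d : Derivation ℂ Lt Lt) (hd : ∀ n : ℤ, d (tp n) = (n : ℂ) • tp (n - 1))
    (ι : Lt ≃ₐ[ℂ] Lt) (hι : ι (tp 1) = - tp 1)
    (r : Rb →ₗ[ℂ] Rb →ₗ[ℂ] Lt)
    (hB1 : ∀ n m : ℤ, r (gp n) (gp m) = tp (n * m * (N : ℤ)))
    (hB2 : ∀ v w : Rb, r w v = ι (r v w))
    (hB3 : ∀ v w : Rb, r (D v) w = d (r v w))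
    (hB4 : ∀ v₁ v₂ w : Rb, r (v₁ * v₂) w =
      TensorProduct.lift ((LinearMap.mul ℂ Lt).compl₁₂ (r v₁) (r v₂)) (Δ w)) :
    r (yv 1) (gp (-1) * yv 1) = (N : ℂ) • tp (-2) := by
  have hι_inv : ι (tp (-1)) = -tp (-1) :=
    map_T_neg_one_of_map_T_one_eq_neg (ι : Lt →+* Lt) hι
  have h_ginv_y1_g : r (gp (-1) * yv 1) (gp 1) = (N : ℂ) • tp (-1) := by
    rw [bicharacter_gp_mul_apply_gp N Δ hΔg r hB1 hB4,
      bicharacter_y1_apply_gp N D hDg d hd r hB1 hB3, mul_smul_comm, ← tp_add]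
    congr 1 <;> push_cast <;> ring_nf
  calc r (yv 1) (gp (-1) * yv 1)
      = d (r (gp 1) (gp (-1) * yv 1)) := by rw [← hDg, hB3]
    _ = d (ι ((N : ℂ) • tp (-1))) := by rw [hB2, h_ginv_y1_g]
    _ = (N : ℂ) • tp (-2) := by
      rw [map_smul, hι_inv, smul_neg, d.map_neg, d.map_smul, hd, smul_smul, ← neg_smul]
      norm_num

/-- `r(y₁, g⁻¹y₁) = N·t⁻²`. -/
theorem bicharacter_y1_ginv_y1
    (N : ℕ) (hNpos : 0 < N) (hNeven : Even N)
    (D : Derivation ℂ Rb Rb) (hDg : D (gp 1) = yv 1)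
    (hDy : ∀ k : ℕ, 1 ≤ k → D (yv k) = ((k : ℂ) + 1) • yv (k + 1))
    (Δ : Rb →ₐ[ℂ] Rb ⊗[ℂ] Rb)
    (hΔg : ∀ n : ℤ, Δ (gp n) = gp n ⊗ₜ[ℂ] gp n)
    (hΔD : ∀ v : Rb, Δ (D v) =
      (TensorProduct.map D.toLinearMap LinearMap.id
        + TensorProduct.map LinearMap.id D.toLinearMap
        : Rb ⊗[ℂ] Rb →ₗ[ℂ] Rb ⊗[ℂ] Rb) (Δ v))
    (d : Derivation ℂ Lt Lt) (hd : ∀ n : ℤ, d (tp n) = (n : ℂ) • tp (n - 1))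
    (ι : Lt ≃ₐ[ℂ] Lt) (hι : ι (tp 1) = - tp 1)
    (r : Rb →ₗ[ℂ] Rb →ₗ[ℂ] Lt)
    (hB1 : ∀ n m : ℤ, r (gp n) (gp m) = tp (n * m * (N : ℤ)))
    (hB2 : ∀ v w : Rb, r w v = ι (r v w))
    (hB3 : ∀ v w : Rb, r (D v) w = d (r v w))
    (hB4 : ∀ v₁ v₂ w : Rb, r (v₁ * v₂) w =
      TensorProduct.lift ((LinearMap.mul ℂ Lt).compl₁₂ (r v₁) (r v₂)) (Δ w)) :
    r (yv 1) (gp (-1) * yv 1) = (N : ℂ) • tp (-2) :=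
  bicharacter_y1_ginv_y1_general N D hDg Δ hΔg d hd ι hι r hB1 hB2 hB3 hB4
end
end

section
/- The bicharacter r satisfies r(g⁻¹y₁, g⁻¹y₁) = N·t⁻². (In the paper's notation: r(e^{−λ₀}λ₀(1) ⊗ e^{−λ₀}λ₀(1)) = N(x−y)⁻².) -/
open TensorProduct

noncomputable section

/-!
Put `a = g⁻¹y₁`. As `g` is grouplike and `Δ` intertwines `D` with `D ⊗ id + id ⊗ D`, the element
`y₁ = Dg` satisfies `Δy₁ = y₁ ⊗ g + g ⊗ y₁`, so `a` is primitive. Then (B4) splits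
`r(a, a) = r(g⁻¹, a) r(y₁, 1) + r(g⁻¹, 1) r(y₁, a)`, where `r(y₁, 1) = d(t⁰) = 0` and
`r(g⁻¹, 1) = 1`. Since `g` is grouplike, `r(a, g) = t^{-N} · N t^{N-1} = N t⁻¹`; so
`r(g, a) = ι(N t⁻¹) = -N t⁻¹` by (B2) and `r(y₁, a) = d(-N t⁻¹) = N t⁻²` by (B3).
-/

open LaurentPolynomial

section Coproduct

variable {K A : Type*} [CommRing K] [CommRing A] [Algebra K A]

theorem map_derivation_of_grouplike (D : Derivation K A A) (Δ : A → A ⊗[K] A)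
    (hΔD : ∀ v : A, Δ (D v) =
      (TensorProduct.map D.toLinearMap LinearMap.id
        + TensorProduct.map LinearMap.id D.toLinearMap
        : A ⊗[K] A →ₗ[K] A ⊗[K] A) (Δ v))
    {g : A} (hg : Δ g = g ⊗ₜ g) :
    Δ (D g) = D g ⊗ₜ g + g ⊗ₜ D g := by
  simp [hΔD, hg]

theorem map_mul_eq_primitive (Δ : A →ₐ[K] A ⊗[K] A) {u g x : A} (hug : u * g = 1)
    (hu : Δ u = u ⊗ₜ u) (hx : Δ x = x ⊗ₜ g + g ⊗ₜ x) :
    Δ (u * x) = (u * x) ⊗ₜ 1 + 1 ⊗ₜ (u * x) := by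
  rw [map_mul, hu, hx, mul_add, Algebra.TensorProduct.tmul_mul_tmul,
    Algebra.TensorProduct.tmul_mul_tmul, hug, mul_comm u x]

end Coproduct

section Bicharacter

variable {K A B : Type*} [CommRing K] [CommRing A] [Algebra K A] [CommRing B] [Algebra K B]
  (r : A →ₗ[K] A →ₗ[K] B) (Δ : A → A ⊗[K] A)
  (hr : ∀ v₁ v₂ w : A, r (v₁ * v₂) w =
    TensorProduct.lift ((LinearMap.mul K B).compl₁₂ (r v₁) (r v₂)) (Δ w))
include hr

theorem apply_mul_of_grouplike {w : A} (hw : Δ w = w ⊗ₜ w) (v₁ v₂ : A) :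
    r (v₁ * v₂) w = r v₁ w * r v₂ w := by
  simp [hr, hw]

theorem apply_mul_of_primitive {w : A} (hw : Δ w = w ⊗ₜ 1 + 1 ⊗ₜ w) (v₁ v₂ : A) :
    r (v₁ * v₂) w = r v₁ w * r v₂ 1 + r v₁ 1 * r v₂ w := by
  simp [hr, hw]

end Bicharacter

theorem map_eq_neg_of_mul_eq_one {R F : Type*} [CommRing R] [FunLike F R R]
    [RingHomClass F R R] (f : F) {u v : R} (hvu : v * u = 1) (hu : f u = -u) : f v = -v := by
  have hfv : f v * u = -1 := by
    rw [← neg_neg (f v * u), ← mul_neg, ← hu, ← map_mul, hvu, map_one]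
  calc f v = f v * u * v := by rw [mul_assoc, mul_comm u, hvu, mul_one]
    _ = -v := by rw [hfv, neg_one_mul]

theorem tp_mul_tp (n m : ℤ) : tp n * tp m = tp (n + m) := (T_add n m).symm

theorem gp_mul_gp (n m : ℤ) : gp n * gp m = gp (n + m) := (T_add n m).symm

theorem gp_zero : gp 0 = 1 := T_zero

theorem tp_neg_one_mul_tp_one : tp (-1) * tp 1 = 1 := by rw [tp_mul_tp]; exact T_zero

theorem gp_neg_one_mul_gp_one : gp (-1) * gp 1 = 1 := by rw [gp_mul_gp]; exact T_zero

theorem bicharacter_ginv_y1_ginv_y1_general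
    (N : ℕ)
    (D : Derivation ℂ Rb Rb) (hDg : D (gp 1) = yv 1)
    (Δ : Rb →ₐ[ℂ] Rb ⊗[ℂ] Rb)
    (hΔg : ∀ n : ℤ, Δ (gp n) = gp n ⊗ₜ[ℂ] gp n)
    (hΔD : ∀ v : Rb, Δ (D v) =
      (TensorProduct.map D.toLinearMap LinearMap.id
        + TensorProduct.map LinearMap.id D.toLinearMap
        : Rb ⊗[ℂ] Rb →ₗ[ℂ] Rb ⊗[ℂ] Rb) (Δ v))
    (d : Derivation ℂ Lt Lt) (hd : ∀ n : ℤ, d (tp n) = (n : ℂ) • tp (n - 1))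
    (ι : Lt ≃ₐ[ℂ] Lt) (hι : ι (tp 1) = - tp 1)
    (r : Rb →ₗ[ℂ] Rb →ₗ[ℂ] Lt)
    (hB1 : ∀ n m : ℤ, r (gp n) (gp m) = tp (n * m * (N : ℤ)))
    (hB2 : ∀ v w : Rb, r w v = ι (r v w))
    (hB3 : ∀ v w : Rb, r (D v) w = d (r v w))
    (hB4 : ∀ v₁ v₂ w : Rb, r (v₁ * v₂) w =
      TensorProduct.lift ((LinearMap.mul ℂ Lt).compl₁₂ (r v₁) (r v₂)) (Δ w)) :
    r (gp (-1) * yv 1) (gp (-1) * yv 1) = (N : ℂ) • tp (-2) := by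
  set a := gp (-1) * yv 1
  have hΔa : Δ a = a ⊗ₜ 1 + 1 ⊗ₜ a := by
    refine map_mul_eq_primitive Δ gp_neg_one_mul_gp_one (hΔg (-1)) ?_
    rw [← hDg, map_derivation_of_grouplike D Δ hΔD (hΔg 1)]
  have hy_g : r (yv 1) (gp 1) = (N : ℂ) • tp (N - 1) := by
    rw [← hDg, hB3, hB1, hd]; push_cast; ring_nf
  have hy_one : r (yv 1) 1 = 0 := by
    rw [← hDg, ← gp_zero, hB3, hB1, hd]; simp
  have hginv_one : r (gp (-1)) 1 = 1 := by
    rw [← gp_zero, hB1]; simp [tp]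
  have ha_g : r a (gp 1) = (N : ℂ) • tp (-1) := by
    rw [apply_mul_of_grouplike r Δ hB4 (hΔg 1), hB1, hy_g, mul_smul_comm, tp_mul_tp]
    ring_nf
  have hg_a : r (gp 1) a = -((N : ℂ) • tp (-1)) := by
    rw [hB2, ha_g, map_smul,
      map_eq_neg_of_mul_eq_one ι tp_neg_one_mul_tp_one hι, smul_neg]
  have hy_a : r (yv 1) a = (N : ℂ) • tp (-2) := by
    rw [← hDg, hB3, hg_a, map_neg, d.map_smul, hd, smul_smul, ← neg_smul]
    norm_num
  rw [apply_mul_of_primitive r Δ hB4 hΔa, hy_one, hginv_one, hy_a, mul_zero, zero_add, one_mul]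

/-- `r(g⁻¹y₁, g⁻¹y₁) = N·t⁻²`. -/
theorem bicharacter_ginv_y1_ginv_y1
    (N : ℕ) (hNpos : 0 < N) (hNeven : Even N)
    (D : Derivation ℂ Rb Rb) (hDg : D (gp 1) = yv 1)
    (hDy : ∀ k : ℕ, 1 ≤ k → D (yv k) = ((k : ℂ) + 1) • yv (k + 1))
    (Δ : Rb →ₐ[ℂ] Rb ⊗[ℂ] Rb)
    (hΔg : ∀ n : ℤ, Δ (gp n) = gp n ⊗ₜ[ℂ] gp n)
    (hΔD : ∀ v : Rb, Δ (D v) =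
      (TensorProduct.map D.toLinearMap LinearMap.id
        + TensorProduct.map LinearMap.id D.toLinearMap
        : Rb ⊗[ℂ] Rb →ₗ[ℂ] Rb ⊗[ℂ] Rb) (Δ v))
    (d : Derivation ℂ Lt Lt) (hd : ∀ n : ℤ, d (tp n) = (n : ℂ) • tp (n - 1))
    (ι : Lt ≃ₐ[ℂ] Lt) (hι : ι (tp 1) = - tp 1)
    (r : Rb →ₗ[ℂ] Rb →ₗ[ℂ] Lt)
    (hB1 : ∀ n m : ℤ, r (gp n) (gp m) = tp (n * m * (N : ℤ)))
    (hB2 : ∀ v w : Rb, r w v = ι (r v w))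
    (hB3 : ∀ v w : Rb, r (D v) w = d (r v w))
    (hB4 : ∀ v₁ v₂ w : Rb, r (v₁ * v₂) w =
      TensorProduct.lift ((LinearMap.mul ℂ Lt).compl₁₂ (r v₁) (r v₂)) (Δ w)) :
    r (gp (-1) * yv 1) (gp (-1) * yv 1) = (N : ℂ) • tp (-2) :=
  bicharacter_ginv_y1_ginv_y1_general N D hDg Δ hΔg hΔD d hd ι hι r hB1 hB2 hB3 hB4
end
end
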